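/- Fix integers 1 ≤ n ≤ m, a real ρ ≥ 1, and A ∈ A_{m,n}. Let S(A) := ⋃_{i=1}^n supp(A^{(i)}) ⊆ [m] (where A^{(i)} is the i-th column of A) and N(A) := m − |S(A)|. Fix deterministic vectors ω_j ∈ ℝⁿ for j ∈ S(A), let (g_j)_{j ∈ [m]∖S(A)} be independent N(0, Idₙ) random vectors, and let Γ be the random n×m matrix whose j-th column is ω_j for j ∈ S(A) and g_j for j ∉ S(A). Set K := 2ρ·(ΓA)(B₁ⁿ); this set is deterministic, since all rows of A outside S(A) vanish. Then ℙ( Γ(B₁^m) ⊆ 2ρ·(ΓA)(B₁ⁿ) ) equals γ_n(K)^{N(A)} if ω_j ∈ K for every j ∈ S(A), and equals 0 otherwise. -/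

import Mathlib

/-! Rows of `A` outside `S(A)` vanish, so `ΓA` does not involve the Gaussian columns and `K` is
deterministic. As a linear image of a cross-polytope, `K` is compact, convex and symmetric, and the
image of `B₁^m` under `Γ` lies in such a set iff every column of `Γ` does. The event is therefore
empty if some exposed column `ω_j` lies outside `K`, and otherwise it is the event that the `N(A)`
independent Gaussian columns all lie in `K`. -/

open MeasureTheory ProbabilityTheory Matrix
open scoped ENNReal NNReal Pointwise Classical

noncomputable section

/-- The cross-polytope (closed unit ball of `ℓ₁`) in `ℝ^k`. -/
def B1 (k : ℕ) : Set (Fin k → ℝ) := {x | ∑ i, |x i| ≤ 1}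

/-- Standard Gaussian measure on `Fin d → ℝ`. -/
def gaussianPi (d : ℕ) : Measure (Fin d → ℝ) :=
  Measure.pi fun _ => gaussianReal 0 1

/-- Law of an `n × m` random matrix (encoded as `Fin n → Fin m → ℝ`) with i.i.d. `N(0,1)` entries:
this realizes independent `N(0, Idₙ)` columns. -/
def gaussianMatrix (n m : ℕ) : Measure (Fin n → Fin m → ℝ) :=
  Measure.pi fun _ => gaussianPi m

/-- The class of coefficient matrices: every column has `ℓ₁`-norm at most 1 and
support of size at most `n`. -/
def Amn (m n : ℕ) : Set (Matrix (Fin m) (Fin n) ℝ) :=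
  {A | ∀ i, (∑ j, |A j i|) ≤ 1 ∧ {j | A j i ≠ 0}.ncard ≤ n}

namespace MeasureTheory.Measure

theorem map_swap_pi_pi {ι κ α : Type*} [Fintype ι] [Fintype κ] [MeasurableSpace α]
    (μ : ι → κ → Measure α) [∀ i j, SigmaFinite (μ i j)] :
    (Measure.pi fun i => Measure.pi (μ i)).map Function.swap =
      Measure.pi fun j => Measure.pi fun i => μ i j := by
  refine (pi_eq_generateFrom (fun _ => generateFrom_pi) (fun _ => isPiSystem_pi)
    (fun j => FiniteSpanningSetsIn.pi fun i => (μ i j).toFiniteSpanningSetsIn) ?_).symm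
  intro s hs
  choose t ht hts using hs
  have ht_meas (j) : MeasurableSet (s j) := hts j ▸ .univ_pi fun i => ht j i (Set.mem_univ i)
  have hpre : Function.swap ⁻¹' Set.univ.pi s =
      Set.univ.pi fun i => Set.univ.pi fun j => t j i := by
    ext g
    simp only [Set.mem_preimage, Set.mem_univ_pi, ← hts, Function.swap]
    exact forall_comm
  rw [map_apply (by fun_prop) (.univ_pi ht_meas), hpre, pi_pi]
  simp_rw [pi_pi, ← hts, pi_pi]
  exact Finset.prod_comm

theorem pi_pi_const {ι α : Type*} [Fintype ι] [MeasurableSpace α] (ν : Measure α)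
    [IsProbabilityMeasure ν] (s : Set ι) (K : Set α) :
    Measure.pi (fun _ : ι => ν) (s.pi fun _ => K) = ν K ^ s.ncard := by
  rw [Set.ncard_eq_toFinset_card', ← Finset.prod_const, ← pi_pi_finset, Set.coe_toFinset]

end MeasureTheory.Measure

theorem gaussianMatrix_swap_preimage_pi (n m : ℕ) (s : Set (Fin m)) {K : Set (Fin n → ℝ)}
    (hK : MeasurableSet K) :
    gaussianMatrix n m (Function.swap ⁻¹' (s.pi fun _ => K)) = gaussianPi n K ^ s.ncard := by
  rw [← Measure.map_apply (by fun_prop) (.pi (Set.to_countable _) fun _ _ => hK), gaussianMatrix,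
    gaussianPi, Measure.map_swap_pi_pi, Measure.pi_pi_const]
  rfl

section AbsConvex

variable {E : Type*} [AddCommGroup E] [Module ℝ E] {s : Set E}

theorem AbsConvex.sum_smul_mem {ι : Type*} (hs : AbsConvex ℝ s) (h0 : 0 ∈ s) (t : Finset ι)
    {w : ι → ℝ} {z : ι → E} (hz : ∀ i ∈ t, z i ∈ s) (hw : ∑ i ∈ t, |w i| ≤ 1) :
    ∑ i ∈ t, w i • z i ∈ s := by
  -- `w • s = |w| • s` as `s` is balanced, and `a • s + b • s = (a + b) • s` for `a, b ≥ 0`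
  -- by convexity
  have hmem : ∑ i ∈ t, w i • z i ∈ (∑ i ∈ t, |w i|) • s := by
    clear hw
    induction t using Finset.cons_induction with
    | empty => simpa using Set.zero_mem_smul_set h0
    | cons a t ha ih =>
      rw [Finset.sum_cons, Finset.sum_cons,
        hs.2.add_smul (abs_nonneg _) (Finset.sum_nonneg fun i _ => abs_nonneg _)]
      refine Set.add_mem_add ?_ (ih fun i hi => hz i (Finset.mem_cons_of_mem hi))
      rw [← hs.1.smul_congr (a := w a) (by simp)]
      exact Set.smul_mem_smul_set (hz a (Finset.mem_cons_self a t))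
  refine hs.1 _ ?_ hmem
  rwa [Real.norm_of_nonneg (Finset.sum_nonneg fun i _ => abs_nonneg _)]

theorem AbsConvex.linear_image {F : Type*} [AddCommGroup F] [Module ℝ F] (hs : AbsConvex ℝ s)
    (f : E →ₗ[ℝ] F) : AbsConvex ℝ (f '' s) := by
  refine ⟨fun a ha => ?_, hs.2.linear_image f⟩
  rintro _ ⟨_, ⟨x, hx, rfl⟩, rfl⟩
  exact ⟨a • x, hs.1.smul_mem ha hx, map_smul f a x⟩

theorem AbsConvex.smul (hs : AbsConvex ℝ s) (c : ℝ) : AbsConvex ℝ (c • s) :=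
  ⟨hs.1.smul c, hs.2.smul c⟩

end AbsConvex

section CrossPolytope

variable {k l : ℕ}

theorem B1_eq_image_closedBall :
    B1 k = PiLp.continuousLinearEquiv 1 ℝ (fun _ : Fin k => ℝ) '' Metric.closedBall 0 1 := by
  ext x
  refine ⟨fun hx => ⟨WithLp.toLp 1 x, ?_, rfl⟩, ?_⟩
  · simpa [B1, PiLp.norm_eq_of_L1] using hx
  · rintro ⟨y, hy, rfl⟩
    simpa [B1, PiLp.norm_eq_of_L1] using hy

theorem absConvex_B1 : AbsConvex ℝ (B1 k) := by
  have hball : AbsConvex ℝ (Metric.closedBall (0 : PiLp 1 fun _ : Fin k => ℝ) 1) :=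
    ⟨balanced_closedBall_zero, convex_closedBall 0 1⟩
  rw [B1_eq_image_closedBall]
  exact hball.linear_image (PiLp.continuousLinearEquiv 1 ℝ _).toLinearEquiv.toLinearMap

theorem isCompact_B1 : IsCompact (B1 k) := by
  rw [B1_eq_image_closedBall]
  exact (isCompact_closedBall 0 1).image (PiLp.continuousLinearEquiv 1 ℝ _).continuous

theorem single_mem_B1 (j : Fin k) : Pi.single j 1 ∈ B1 k := by
  simp [B1, Pi.single_apply, apply_ite]

theorem absConvex_mulVec_image_B1 (M : Matrix (Fin k) (Fin l) ℝ) :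
    AbsConvex ℝ (M.mulVec '' B1 l) :=
  absConvex_B1.linear_image M.mulVecLin

theorem isCompact_mulVec_image_B1 (M : Matrix (Fin k) (Fin l) ℝ) :
    IsCompact (M.mulVec '' B1 l) :=
  isCompact_B1.image M.mulVecLin.continuous_of_finiteDimensional

theorem zero_mem_mulVec_image_B1 (M : Matrix (Fin k) (Fin l) ℝ) : 0 ∈ (M.mulVec '' B1 l) :=
  ⟨0, by simp [B1], M.mulVec_zero⟩

theorem mulVec_image_B1_subset_iff (N : Matrix (Fin k) (Fin l) ℝ) {s : Set (Fin k → ℝ)}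
    (hs : AbsConvex ℝ s) (h0 : 0 ∈ s) : N.mulVec '' B1 l ⊆ s ↔ ∀ j, N.col j ∈ s := by
  refine ⟨fun h j => by simpa using h ⟨_, single_mem_B1 j, rfl⟩, ?_⟩
  rintro h _ ⟨x, hx, rfl⟩
  rw [mulVec_eq_sum]
  simp only [op_smul_eq_smul]
  exact hs.sum_smul_mem h0 _ (fun j _ => h j) hx

end CrossPolytope

theorem Matrix.mul_eq_mul_of_col_eq_of_row_ne_zero {l m n R : Type*} [Fintype m] [Semiring R]
    {P Q : Matrix l m R} {A : Matrix m n R} (h : ∀ j, (∃ k, A j k ≠ 0) → P.col j = Q.col j) :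
    P * A = Q * A := by
  ext i k
  refine Finset.sum_congr rfl fun j _ => ?_
  by_cases hA : A j k = 0
  · simp [hA]
  · exact congrArg (· * A j k) (congrFun (h j ⟨k, hA⟩) i)

theorem powering_identity_general (n m : ℕ) (ρ : ℝ)
    (A : Matrix (Fin m) (Fin n) ℝ) (ω : Fin m → Fin n → ℝ) :
    -- the exposed index set `S(A)` and `N(A) = m - |S(A)|`
    let S : Set (Fin m) := {j | ∃ i, A j i ≠ 0}
    let NA : ℕ := m - S.ncard
    -- the random matrix: column `j` equals `ω j` for `j ∈ S(A)`, and a fresh Gaussian otherwise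
    let Γ : (Fin n → Fin m → ℝ) → Matrix (Fin n) (Fin m) ℝ :=
      fun g => Matrix.of fun i j => if j ∈ S then ω j i else g i j
    -- the deterministic target set `K = 2ρ·(ΓA)(B₁ⁿ)` (rows of `A` outside `S(A)` vanish)
    let Γ₀ : Matrix (Fin n) (Fin m) ℝ := Matrix.of fun i j => if j ∈ S then ω j i else 0
    let K : Set (Fin n → ℝ) := (2 * ρ) • ((Γ₀ * A).mulVec '' B1 n)
    let E : Set (Fin n → Fin m → ℝ) :=
      {g | (Γ g).mulVec '' B1 m ⊆ (2 * ρ) • ((Γ g * A).mulVec '' B1 n)}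
    ((∀ j ∈ S, ω j ∈ K) → gaussianMatrix n m E = gaussianPi n K ^ NA) ∧
      ((¬ ∀ j ∈ S, ω j ∈ K) → gaussianMatrix n m E = 0) := by
  intro S NA Γ Γ₀ K E
  have hΓA (g) : Γ g * A = Γ₀ * A := by
    refine mul_eq_mul_of_col_eq_of_row_ne_zero fun j hj => ?_
    ext i
    simp [Γ, Γ₀, S, hj]
  have hK : AbsConvex ℝ K := (absConvex_mulVec_image_B1 _).smul _
  have hK0 : 0 ∈ K := Set.zero_mem_smul_set (zero_mem_mulVec_image_B1 _)
  have hE (g) : g ∈ E ↔ ∀ j, (if j ∈ S then ω j else Function.swap g j) ∈ K := by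
    have hcol (j) : (Γ g).col j = if j ∈ S then ω j else Function.swap g j := by
      ext i
      split_ifs <;> simp [Γ, *]
    simp only [← hcol]
    change _ ⊆ (2 * ρ) • ((Γ g * A).mulVec '' B1 n) ↔ _
    rw [hΓA g]
    exact mulVec_image_B1_subset_iff _ hK hK0
  constructor
  · intro hω
    have hE_eq : E = Function.swap ⁻¹' (Sᶜ.pi fun _ => K) := by
      ext g
      rw [hE]
      refine forall_congr' fun j => ?_
      by_cases hj : j ∈ S <;> simp [hj, hω j]
    have hK_meas : MeasurableSet K :=
      ((isCompact_mulVec_image_B1 _).smul _).isClosed.measurableSet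
    rw [hE_eq, gaussianMatrix_swap_preimage_pi n m _ hK_meas, Set.ncard_compl, Nat.card_fin]
  · intro hω
    push Not at hω
    obtain ⟨j, hjS, hjK⟩ := hω
    have hE_empty : E = ∅ :=
      Set.eq_empty_of_forall_notMem fun g hg => hjK (by simpa [hjS] using (hE g).1 hg j)
    rw [hE_empty, measure_empty]

/-- powering identity: conditioning on the exposed columns `ω_j`, `j ∈ S(A)`,
the probability that `Γ(B₁^m) ⊆ 2ρ·(ΓA)(B₁ⁿ)` equals `γₙ(K)^{N(A)}` if all exposed columns
lie in `K`, and `0` otherwise. -/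
theorem powering_identity (n m : ℕ) (hn : 1 ≤ n) (hnm : n ≤ m) (ρ : ℝ) (hρ : 1 ≤ ρ)
    (A : Matrix (Fin m) (Fin n) ℝ) (hA : A ∈ Amn m n) (ω : Fin m → Fin n → ℝ) :
    -- the exposed index set `S(A)` and `N(A) = m - |S(A)|`
    let S : Set (Fin m) := {j | ∃ i, A j i ≠ 0}
    let NA : ℕ := m - S.ncard
    -- the random matrix: column `j` equals `ω j` for `j ∈ S(A)`, and a fresh Gaussian otherwise
    let Γ : (Fin n → Fin m → ℝ) → Matrix (Fin n) (Fin m) ℝ :=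
      fun g => Matrix.of fun i j => if j ∈ S then ω j i else g i j
    -- the deterministic target set `K = 2ρ·(ΓA)(B₁ⁿ)` (rows of `A` outside `S(A)` vanish)
    let Γ₀ : Matrix (Fin n) (Fin m) ℝ := Matrix.of fun i j => if j ∈ S then ω j i else 0
    let K : Set (Fin n → ℝ) := (2 * ρ) • ((Γ₀ * A).mulVec '' B1 n)
    let E : Set (Fin n → Fin m → ℝ) :=
      {g | (Γ g).mulVec '' B1 m ⊆ (2 * ρ) • ((Γ g * A).mulVec '' B1 n)}
    ((∀ j ∈ S, ω j ∈ K) → gaussianMatrix n m E = gaussianPi n K ^ NA) ∧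
      ((¬ ∀ j ∈ S, ω j ∈ K) → gaussianMatrix n m E = 0) :=
  powering_identity_general n m ρ A ω
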